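/- If a coin system C = (1, c_2, ..., c_n) is not orderly, then the smallest counterexample v satisfies c_3 < v < c_{n-1} + c_n. -/

import Mathlib

/-- The largest coin value in `C` that is at most `v` (or 0 if none). -/
def coinMax (C : List ℕ) (v : ℕ) : ℕ := (C.filter (· ≤ v)).foldr max 0

/-- Fuelled greedy coin count. -/
def grdAux (C : List ℕ) : ℕ → ℕ → ℕ
  | 0, _ => 0
  | fuel + 1, v =>
    let c := coinMax C v
    if v = 0 ∨ c = 0 then 0 else 1 + grdAux C fuel (v - c)

/-- Number of coins used by the greedy algorithm to represent `v` with coin system `C`. -/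
def grd (C : List ℕ) (v : ℕ) : ℕ := grdAux C v v

/-- The set of sizes of representations of `v` as nonnegative integer combinations of
the coin values in `C`. -/
def reprCosts (C : List ℕ) (v : ℕ) : Set ℕ :=
  {k | ∃ x : List ℕ, x.length = C.length ∧ (List.zipWith (· * ·) x C).sum = v ∧ x.sum = k}

/-- Minimum number of coins needed to represent `v` with coin system `C`. -/
noncomputable def opt (C : List ℕ) (v : ℕ) : ℕ := sInf (reprCosts C v)

/-- A coin system is orderly if greedy is optimal for every positive value. -/
def Orderly (C : List ℕ) : Prop := ∀ v : ℕ, 0 < v → grd C v = opt C v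


/-! For `0 < v ≤ c₃` greedy is optimal, by induction on `v`: with `c` the greedy coin of `v` it
suffices that `opt (v - c) < opt v`. This is clear if an optimal representation of `v` contains `c`.
Otherwise `v < c₃` and the representation consists of `1`s only, because the only coins below `c₃`
are `1` and `c₂`, and `c₂` is the greedy coin as soon as it fits; then `opt v = v > opt (v - c)`.

Let `b = cₙ`, `a = cₙ₋₁` and `w ≥ a + b` with greedy optimal below `w`. If an optimal representation
of `w` avoids `b`, all its coins are at most `a`, so some prefix of it sums to `s` with
`b ≤ s < a + b ≤ w`. Greedy is optimal at `s` and starts with `b` there, so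
`opt (w - b) ≤ opt (s - b) + opt (w - s) ≤ (opt s - 1) + (opt w - opt s)`, and again
`grd w = opt w`. -/

section CoinMax

variable {C : List ℕ} {v c : ℕ}

theorem coinMax_le (C : List ℕ) (v : ℕ) : coinMax C v ≤ v :=
  List.max_le_of_forall_le _ _ fun _ hd => of_decide_eq_true (List.mem_filter.mp hd).2

theorem le_coinMax (hc : c ∈ C) (hcv : c ≤ v) : c ≤ coinMax C v :=
  List.le_max_of_le (List.mem_filter.mpr ⟨hc, decide_eq_true hcv⟩) le_rfl

theorem coinMax_mem (h : coinMax C v ≠ 0) : coinMax C v ∈ C := by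
  have hne : C.filter (· ≤ v) ≠ [] := by
    rintro hnil
    exact h (by simp [coinMax, hnil])
  exact (List.mem_filter.mp (List.maximum_mem (List.foldr_max_of_ne_nil hne).symm)).1

theorem coinMax_eq_of_forall_le (hc : c ∈ C) (hcv : c ≤ v) (hmax : ∀ d ∈ C, d ≤ c) :
    coinMax C v = c :=
  le_antisymm (List.max_le_of_forall_le _ _ fun d hd => hmax d (List.mem_filter.mp hd).1)
    (le_coinMax hc hcv)

end CoinMax

section Greedy

variable {C : List ℕ} {v : ℕ}

theorem grdAux_congr {f g v : ℕ} (hf : v ≤ f) (hg : v ≤ g) : grdAux C f v = grdAux C g v := by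
  induction f generalizing g v with
  | zero =>
    obtain rfl : v = 0 := by omega
    cases g <;> simp [grdAux]
  | succ f ih =>
    cases g with
    | zero =>
      obtain rfl : v = 0 := by omega
      simp [grdAux]
    | succ g =>
      simp only [grdAux]
      split_ifs with h
      · rfl
      · have := coinMax_le C v
        rw [ih (by omega) (by omega : v - coinMax C v ≤ g)]

theorem grd_zero (C : List ℕ) : grd C 0 = 0 := rfl

theorem grd_eq_grd_sub_coinMax_add_one (h1 : 1 ∈ C) (hv : 0 < v) :
    grd C v = grd C (v - coinMax C v) + 1 := by
  obtain ⟨u, rfl⟩ : ∃ u, v = u + 1 := ⟨v - 1, by omega⟩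
  have hc : 1 ≤ coinMax C (u + 1) := le_coinMax h1 hv
  have hif : ¬(u + 1 = 0 ∨ coinMax C (u + 1) = 0) := by omega
  rw [grd, grdAux, if_neg hif, grd, grdAux_congr (by omega) le_rfl, add_comm]

end Greedy

section Representations

variable {C K : List ℕ} {u v k c : ℕ}

theorem reprCosts_zero (C : List ℕ) : 0 ∈ reprCosts C 0 :=
  ⟨List.replicate C.length 0, by simp, by induction C <;> simp_all [List.replicate_succ], by simp⟩

theorem reprCosts_single (hc : c ∈ C) : 1 ∈ reprCosts C c := by
  induction C with
  | nil => simp at hc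
  | cons d C ih =>
    rcases List.mem_cons.mp hc with rfl | hc
    · obtain ⟨x, hlen, hval, hsum⟩ := reprCosts_zero C
      exact ⟨1 :: x, by simpa using hlen, by simp [hval], by simp [hsum]⟩
    · obtain ⟨x, hlen, hval, hsum⟩ := ih hc
      exact ⟨0 :: x, by simpa using hlen, by simp [hval], by simp [hsum]⟩

theorem sum_zipWith_add_mul {x y : List ℕ} (hx : x.length = C.length) (hy : y.length = C.length) :
    (List.zipWith (· * ·) (List.zipWith (· + ·) x y) C).sum =
      (List.zipWith (· * ·) x C).sum + (List.zipWith (· * ·) y C).sum := by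
  induction C generalizing x y with
  | nil => simp
  | cons c C ih =>
    obtain ⟨a, x, rfl⟩ := List.exists_cons_of_length_eq_add_one hx
    obtain ⟨b, y, rfl⟩ := List.exists_cons_of_length_eq_add_one hy
    simp only [List.zipWith_cons_cons, List.sum_cons, ih (by simpa using hx) (by simpa using hy)]
    ring

theorem sum_zipWith_add {x y : List ℕ} (h : x.length = y.length) :
    (List.zipWith (· + ·) x y).sum = x.sum + y.sum := by
  induction x generalizing y with
  | nil => simp [List.length_eq_zero_iff.mp h.symm]
  | cons a x ih =>
    obtain ⟨b, y, rfl⟩ := List.exists_cons_of_length_eq_add_one h.symm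
    simp only [List.zipWith_cons_cons, List.sum_cons, ih (by simpa using h)]
    ring

theorem reprCosts_add (hu : k ∈ reprCosts C u) (hv : c ∈ reprCosts C v) :
    k + c ∈ reprCosts C (u + v) := by
  obtain ⟨x, hxlen, hxval, hxsum⟩ := hu
  obtain ⟨y, hylen, hyval, hysum⟩ := hv
  refine ⟨List.zipWith (· + ·) x y, by simp [hxlen, hylen], ?_, ?_⟩
  · rw [sum_zipWith_add_mul hxlen hylen, hxval, hyval]
  · rw [sum_zipWith_add (hxlen.trans hylen.symm), hxsum, hysum]

theorem length_mem_reprCosts (hK : K ⊆ C) : K.length ∈ reprCosts C K.sum := by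
  induction K with
  | nil => exact reprCosts_zero C
  | cons c K ih =>
    have := reprCosts_add (reprCosts_single (hK List.mem_cons_self))
      (ih fun d hd => hK (List.mem_cons_of_mem c hd))
    simpa [add_comm] using this

theorem exists_subset_of_mem_reprCosts (h : k ∈ reprCosts C v) :
    ∃ K ⊆ C, K.sum = v ∧ K.length = k := by
  obtain ⟨x, hlen, rfl, rfl⟩ := h
  induction C generalizing x with
  | nil => exact ⟨[], by simp, by simp, by simp [List.length_eq_zero_iff.mp hlen]⟩
  | cons c C ih =>
    obtain ⟨m, x, rfl⟩ := List.exists_cons_of_length_eq_add_one hlen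
    obtain ⟨K, hK, hsum, hKlen⟩ := ih x (by simpa using hlen)
    refine ⟨List.replicate m c ++ K, ?_, by simp [hsum, mul_comm], by simp [hKlen]⟩
    intro d hd
    rcases List.mem_append.mp hd with hd | hd
    · simp [List.eq_of_mem_replicate hd]
    · exact List.mem_cons_of_mem c (hK hd)

end Representations

section Optimal

variable {C K : List ℕ} {u v c : ℕ}

theorem opt_le_length (hK : K ⊆ C) : opt C K.sum ≤ K.length :=
  Nat.sInf_le (length_mem_reprCosts hK)

theorem opt_zero (C : List ℕ) : opt C 0 = 0 :=
  Nat.le_zero.mp (opt_le_length (K := []) (List.nil_subset C))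

theorem opt_sub_add_one_le_length (hK : K ⊆ C) (hc : c ∈ K) : opt C (K.sum - c) + 1 ≤ K.length := by
  have hsum : (K.erase c).sum = K.sum - c := by rw [← List.sum_erase hc]; omega
  have hopt := opt_le_length (List.Subset.trans (List.erase_subset (a := c)) hK)
  rw [hsum, List.length_erase_of_mem hc] at hopt
  have : 0 < K.length := List.length_pos_of_mem hc
  omega

variable (h1 : 1 ∈ C)
include h1

theorem opt_le_self (v : ℕ) : opt C v ≤ v := by
  have hK : List.replicate v 1 ⊆ C := fun d hd => List.eq_of_mem_replicate hd ▸ h1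
  simpa using opt_le_length hK

theorem exists_subset_length_eq_opt (v : ℕ) : ∃ K ⊆ C, K.sum = v ∧ K.length = opt C v := by
  have hK : List.replicate v 1 ⊆ C := fun d hd => List.eq_of_mem_replicate hd ▸ h1
  have hne : (reprCosts C v).Nonempty := ⟨_, by simpa using length_mem_reprCosts hK⟩
  exact exists_subset_of_mem_reprCosts (Nat.sInf_mem hne)

theorem opt_add_le (u v : ℕ) : opt C (u + v) ≤ opt C u + opt C v := by
  obtain ⟨K, hK, rfl, hKlen⟩ := exists_subset_length_eq_opt h1 u
  obtain ⟨L, hL, rfl, hLlen⟩ := exists_subset_length_eq_opt h1 v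
  simpa [hKlen, hLlen] using opt_le_length (List.append_subset.mpr ⟨hK, hL⟩)

theorem opt_pos (hv : 0 < v) : 0 < opt C v := by
  obtain ⟨K, -, rfl, hKlen⟩ := exists_subset_length_eq_opt h1 v
  rw [← hKlen]
  exact List.length_pos_iff.mpr fun hnil => by simp [hnil] at hv

theorem opt_le_opt_sub_add_one (hc : c ∈ C) (hcv : c ≤ v) : opt C v ≤ opt C (v - c) + 1 := by
  have hsingle : opt C c ≤ 1 := by simpa using opt_le_length (K := [c]) (by simpa using hc)
  have := opt_add_le h1 (v - c) c
  rw [Nat.sub_add_cancel hcv] at this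
  omega

theorem grd_eq_opt_of_sub_coinMax (hv : 0 < v)
    (hrec : grd C (v - coinMax C v) = opt C (v - coinMax C v))
    (hstep : opt C (v - coinMax C v) + 1 ≤ opt C v) : grd C v = opt C v := by
  have hc : 1 ≤ coinMax C v := le_coinMax h1 hv
  have hopt := opt_le_opt_sub_add_one h1 (coinMax_mem (by omega)) (coinMax_le C v)
  rw [grd_eq_grd_sub_coinMax_add_one h1 hv, hrec]
  omega

end Optimal

section Sorted

variable {C : List ℕ} {d : ℕ}

theorem getD_mem {i : ℕ} (hi : i < C.length) : C.getD i 0 ∈ C := by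
  rw [List.getD_eq_getElem C 0 hi]
  exact List.getElem_mem hi

variable (hC : C.Pairwise (· < ·))
include hC

theorem getD_le_getD {i j : ℕ} (hij : i ≤ j) (hj : j < C.length) : C.getD i 0 ≤ C.getD j 0 := by
  rw [List.getD_eq_getElem C 0 (hij.trans_lt hj), List.getD_eq_getElem C 0 hj]
  rcases hij.lt_or_eq with hlt | rfl
  · exact (List.pairwise_iff_getElem.mp hC i j _ hj hlt).le
  · rfl

theorem le_getD_of_lt_getD_succ {i : ℕ} (hd : d ∈ C) (hlt : d < C.getD (i + 1) 0) :
    d ≤ C.getD i 0 := by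
  obtain ⟨j, hj, rfl⟩ := List.mem_iff_getElem.mp hd
  have hi : i + 1 < C.length := by
    by_contra hi
    rw [List.getD_eq_default C 0 (by omega)] at hlt
    omega
  rw [← List.getD_eq_getElem C 0 hj] at hlt ⊢
  rcases le_or_gt j i with hji | hij
  · exact getD_le_getD hC hji (by omega)
  · exact absurd (getD_le_getD hC (i := i + 1) hij hj) (by omega)

theorem le_getD_length_sub_one (hd : d ∈ C) : d ≤ C.getD (C.length - 1) 0 := by
  obtain ⟨j, hj, rfl⟩ := List.mem_iff_getElem.mp hd
  rw [← List.getD_eq_getElem C 0 hj]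
  exact getD_le_getD hC (by omega) (by omega)

theorem opt_sub_coinMax_add_one_le_of_le_getD_two (h0 : C.getD 0 0 = 1) (h2 : 2 < C.length)
    {v : ℕ} (hv : 0 < v) (hv₃ : v ≤ C.getD 2 0) : opt C (v - coinMax C v) + 1 ≤ opt C v := by
  have h1 : 1 ∈ C := h0 ▸ getD_mem (by omega)
  set c := coinMax C v
  have hc1 : 1 ≤ c := le_coinMax h1 hv
  have hcC : c ∈ C := coinMax_mem (by omega)
  have hcv : c ≤ v := coinMax_le C v
  obtain ⟨K, hK, hKsum, hKlen⟩ := exists_subset_length_eq_opt h1 v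
  by_cases hcK : c ∈ K
  · simpa [hKsum, hKlen] using opt_sub_add_one_le_length hK hcK
  rcases hv₃.lt_or_eq with hv₃ | rfl
  · have hKone : ∀ d ∈ K, d ≤ 1 := by
      intro d hd
      have hdv : d ≤ v := hKsum ▸ List.le_sum_of_mem hd
      have hd₂ : d ≤ C.getD 1 0 :=
        le_getD_of_lt_getD_succ hC (i := 1) (hK hd) (show d < C.getD 2 0 by omega)
      have hc₂ : c ≤ C.getD 1 0 :=
        le_getD_of_lt_getD_succ hC (i := 1) hcC (show c < C.getD 2 0 by omega)
      have hd₂' : d < C.getD 1 0 := by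
        refine hd₂.lt_of_ne fun hdc => hcK ?_
        have : C.getD 1 0 ≤ c := le_coinMax (getD_mem (by omega)) (hdc ▸ hdv)
        rwa [show c = d by omega]
      exact h0 ▸ le_getD_of_lt_getD_succ hC (hK hd) hd₂'
    have hvK : v ≤ K.length := by simpa [hKsum] using List.sum_le_card_nsmul K 1 hKone
    have := opt_le_self h1 (v - c)
    omega
  · have hc : c = C.getD 2 0 := le_antisymm hcv (le_coinMax (getD_mem h2) le_rfl)
    have := opt_pos h1 hv
    simp only [hc, Nat.sub_self, opt_zero]
    omega

theorem grd_eq_opt_of_le_getD_two (h0 : C.getD 0 0 = 1) (h2 : 2 < C.length) :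
    ∀ v ≤ C.getD 2 0, grd C v = opt C v := by
  have h1 : 1 ∈ C := h0 ▸ getD_mem (by omega)
  intro v
  induction v using Nat.strong_induction_on with
  | _ v ih =>
    intro hv₃
    rcases Nat.eq_zero_or_pos v with rfl | hv
    · rw [grd_zero, opt_zero]
    · have hc : 1 ≤ coinMax C v := le_coinMax h1 hv
      exact grd_eq_opt_of_sub_coinMax h1 hv (ih _ (by omega) (by omega))
        (opt_sub_coinMax_add_one_le_of_le_getD_two hC h0 h2 hv hv₃)

end Sorted

theorem List.exists_append_le_sum_lt (K : List ℕ) {t a : ℕ} (ht : 0 < t) (htK : t ≤ K.sum)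
    (ha : ∀ c ∈ K, c ≤ a) : ∃ K₁ K₂, K = K₁ ++ K₂ ∧ t ≤ K₁.sum ∧ K₁.sum < t + a := by
  induction K generalizing t with
  | nil => simp at htK; omega
  | cons c K ih =>
    have hca := ha c List.mem_cons_self
    by_cases htc : t ≤ c
    · exact ⟨[c], K, rfl, by simpa using htc, by simp; omega⟩
    · obtain ⟨K₁, K₂, rfl, h₁, h₂⟩ := ih (t := t - c) (by omega) (by simp at htK; omega)
        fun d hd => ha d (List.mem_cons_of_mem c hd)
      exact ⟨c :: K₁, K₂, rfl, by simp; omega, by simp; omega⟩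

section TopCoin

variable {C : List ℕ} {a b w : ℕ} (h1 : 1 ∈ C) (hb : b ∈ C) (hmax : ∀ d ∈ C, d ≤ b)
  (ha : ∀ d ∈ C, d < b → d ≤ a) (hw : a + b ≤ w) (hmin : ∀ u < w, grd C u = opt C u)
include h1 hb hmax ha hw hmin

theorem opt_sub_add_one_le_of_add_le : opt C (w - b) + 1 ≤ opt C w := by
  obtain ⟨K, hK, hKsum, hKlen⟩ := exists_subset_length_eq_opt h1 w
  by_cases hbK : b ∈ K
  · simpa [hKsum, hKlen] using opt_sub_add_one_le_length hK hbK
  have hb1 : 1 ≤ b := hmax 1 h1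
  have hKa : ∀ d ∈ K, d ≤ a := fun d hd =>
    ha d (hK hd) ((hmax d (hK hd)).lt_of_ne fun h => hbK (h ▸ hd))
  obtain ⟨K₁, K₂, rfl, hbs, hsb⟩ := K.exists_append_le_sum_lt hb1 (by omega) hKa
  simp only [List.sum_append, List.length_append] at hKsum hKlen
  have hK₁ : K₁ ⊆ C := fun d hd => hK (List.mem_append_left K₂ hd)
  have hK₂ : K₂ ⊆ C := fun d hd => hK (List.mem_append_right K₁ hd)
  -- greedy is optimal at `K₁.sum < w` and takes `b` first there
  have hs : opt C K₁.sum = opt C (K₁.sum - b) + 1 := by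
    rw [← hmin K₁.sum (by omega), grd_eq_grd_sub_coinMax_add_one h1 (by omega),
      coinMax_eq_of_forall_le hb hbs hmax, hmin _ (by omega)]
  have := opt_le_length hK₁
  have := opt_le_length hK₂
  calc opt C (w - b) + 1 = opt C (K₁.sum - b + K₂.sum) + 1 := by congr 2; omega
    _ ≤ opt C (K₁.sum - b) + opt C K₂.sum + 1 := by gcongr; exact opt_add_le h1 _ _
    _ ≤ opt C w := by omega

theorem grd_eq_opt_of_add_le : grd C w = opt C w := by
  have hb1 : 1 ≤ b := hmax 1 h1
  have hcm : coinMax C w = b := coinMax_eq_of_forall_le hb (by omega) hmax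
  refine grd_eq_opt_of_sub_coinMax h1 (by omega) ?_ ?_ <;> rw [hcm]
  · exact hmin _ (by omega)
  · exact opt_sub_add_one_le_of_add_le h1 hb hmax ha hw hmin

end TopCoin

theorem stmt_4 (C : List ℕ) (hchain : List.Chain' (· < ·) C)
    (hhead : C.getD 0 0 = 1) (hlen : 3 ≤ C.length)
    (hnot : ¬ Orderly C) :
    C.getD 2 0 < sInf {v : ℕ | 0 < v ∧ grd C v ≠ opt C v} ∧
    sInf {v : ℕ | 0 < v ∧ grd C v ≠ opt C v} <
      C.getD (C.length - 2) 0 + C.getD (C.length - 1) 0 := by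
  have hC : C.Pairwise (· < ·) := List.isChain_iff_pairwise.mp hchain
  set S := {v : ℕ | 0 < v ∧ grd C v ≠ opt C v}
  obtain ⟨v, hv, hne⟩ : ∃ v, 0 < v ∧ grd C v ≠ opt C v := by simpa [Orderly] using hnot
  have hS : sInf S ∈ S := Nat.sInf_mem ⟨v, hv, hne⟩
  have hmin : ∀ u < sInf S, grd C u = opt C u := by
    intro u hu
    rcases Nat.eq_zero_or_pos u with rfl | hu₀
    · rw [grd_zero, opt_zero]
    · by_contra h
      exact Nat.notMem_of_lt_sInf hu ⟨hu₀, h⟩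
  refine ⟨lt_of_not_ge fun h => hS.2 (grd_eq_opt_of_le_getD_two hC hhead hlen _ h),
    lt_of_not_ge fun h => hS.2 (grd_eq_opt_of_add_le (hhead ▸ getD_mem (by omega))
      (getD_mem (by omega)) (fun d => le_getD_length_sub_one hC) (fun d hd hlt => ?_) h hmin)⟩
  exact le_getD_of_lt_getD_succ hC hd (by rwa [show C.length - 2 + 1 = C.length - 1 by omega])
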